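/- Let p be a prime, d ≥ 1, f a polynomial in d variables over ℤ_p, and n ∈ ℕ. Then the Haar measure of the set Y_{n,f} = {x ∈ ℤ_p^d : |f(x)|_p = p^{-n}} equals card(X_{n,f}) · p^{-(n+1)d}, where X_{n,f} is the image of Y_{n,f} in (ℤ_p/p^{n+1}ℤ_p)^d. -/

import Mathlib

open MeasureTheory MvPolynomial
open scoped ENNReal

/-- `Y_{n,f}`: the set of `x ∈ ℤ_p^d` with `|f(x)|_p = p^{-n}`. -/
def Yset (p : ℕ) [Fact p.Prime] {d : ℕ} (f : MvPolynomial (Fin d) ℤ_[p]) (n : ℕ) :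
    Set (Fin d → ℤ_[p]) :=
  {x | ‖MvPolynomial.eval x f‖ = (p : ℝ) ^ (-(n : ℤ))}

/-- `X_{n,f}`: the image of `Y_{n,f}` under coordinatewise reduction mod `p^{n+1}`. -/
def Xset (p : ℕ) [Fact p.Prime] {d : ℕ} (f : MvPolynomial (Fin d) ℤ_[p]) (n : ℕ) :
    Set (Fin d → ZMod (p ^ (n + 1))) :=
  (fun (x : Fin d → ℤ_[p]) (i : Fin d) => PadicInt.toZModPow (n + 1) (x i)) '' Yset p f n

/-!
Coordinatewise reduction modulo `p^(n+1)` is a surjective additive homomorphism from `ℤ_p^d` onto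
the finite group `(ℤ/p^(n+1))^d`. Its fibres are translates of its kernel, so by translation
invariance each has measure `p^(-(n+1)d)`. By the ultrametric inequality, `|f(x)|_p = p^(-n)`
only depends on `x` modulo `p^(n+1)`, so `Y_{n,f}` is the union of the fibres over `X_{n,f}`.
-/

section FiniteQuotient

variable {F G H : Type*} [AddGroup G] [AddGroup H] [FunLike F G H] [AddMonoidHomClass F G H]

lemma preimage_singleton_map_eq_preimage_neg_add (φ : F) (g : G) :
    φ ⁻¹' {φ g} = (fun x => -g + x) ⁻¹' (φ ⁻¹' {0}) := by
  ext x
  simp only [Set.mem_preimage, Set.mem_singleton_iff, map_add, map_neg, neg_add_eq_zero]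
  exact eq_comm

variable [MeasurableSpace G] [MeasurableAdd G] {μ : Measure G} [μ.IsAddLeftInvariant] {φ : F}

lemma measure_preimage_singleton_eq_of_surjective (hφ : Function.Surjective φ) (h : H) :
    μ (φ ⁻¹' {h}) = μ (φ ⁻¹' {0}) := by
  obtain ⟨g, rfl⟩ := hφ h
  rw [preimage_singleton_map_eq_preimage_neg_add, measure_preimage_add]

lemma measurableSet_preimage_singleton_of_surjective (hφ : Function.Surjective φ)
    (hker : MeasurableSet (φ ⁻¹' {0})) (h : H) : MeasurableSet (φ ⁻¹' {h}) := by
  obtain ⟨g, rfl⟩ := hφ h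
  rw [preimage_singleton_map_eq_preimage_neg_add]
  exact hker.preimage (measurable_const_add _)

lemma measure_preimage_eq_ncard_mul_of_surjective [Finite H] (hφ : Function.Surjective φ)
    (hker : MeasurableSet (φ ⁻¹' {0})) (S : Set H) :
    μ (φ ⁻¹' S) = S.ncard * μ (φ ⁻¹' {0}) := by
  lift S to Finset H using S.toFinite
  rw [← sum_measure_preimage_singleton _
      fun h _ => measurableSet_preimage_singleton_of_surjective hφ hker h,
    Finset.sum_congr rfl fun h _ => measure_preimage_singleton_eq_of_surjective hφ h,
    Finset.sum_const, nsmul_eq_mul, Set.ncard_coe_finset]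

lemma measure_preimage_zero_eq_inv_card_of_surjective [Finite H] (hφ : Function.Surjective φ)
    (hker : MeasurableSet (φ ⁻¹' {0})) (hμ : μ Set.univ = 1) :
    μ (φ ⁻¹' {0}) = (Nat.card H : ℝ≥0∞)⁻¹ := by
  apply ENNReal.eq_inv_of_mul_eq_one_left
  rw [mul_comm, ← Set.ncard_univ, ← measure_preimage_eq_ncard_mul_of_surjective hφ hker,
    Set.preimage_univ, hμ]

end FiniteQuotient

namespace PadicInt

variable {p : ℕ} [Fact p.Prime]

lemma toZModPow_eq_zero_iff {m : ℕ} {z : ℤ_[p]} :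
    toZModPow m z = 0 ↔ ‖z‖ ≤ (p : ℝ) ^ (-(m : ℤ)) := by
  rw [norm_le_pow_iff_mem_span_pow, ← ker_toZModPow, RingHom.mem_ker]

lemma toZModPow_eq_iff {m : ℕ} {z w : ℤ_[p]} :
    toZModPow m z = toZModPow m w ↔ ‖z - w‖ ≤ (p : ℝ) ^ (-(m : ℤ)) := by
  rw [← toZModPow_eq_zero_iff, map_sub, sub_eq_zero]

lemma norm_eq_of_toZModPow_succ_eq {n : ℕ} {z w : ℤ_[p]}
    (h : toZModPow (n + 1) z = toZModPow (n + 1) w) (hz : ‖z‖ = (p : ℝ) ^ (-(n : ℤ))) :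
    ‖w‖ = (p : ℝ) ^ (-(n : ℤ)) := by
  have hlt : ‖w - z‖ < ‖z‖ := by
    rw [hz]
    refine (toZModPow_eq_iff.mp h.symm).trans_lt (zpow_lt_zpow_right₀ ?_ (by omega))
    exact_mod_cast (Fact.out : p.Prime).one_lt
  rw [← hz, ← sub_add_cancel w z, IsUltrametricDist.norm_add_eq_max_of_norm_ne_norm hlt.ne,
    max_eq_right hlt.le]

lemma measurableSet_compLeft_toZModPow_preimage_zero [MeasurableSpace ℤ_[p]] [BorelSpace ℤ_[p]]
    {ι : Type*} [Countable ι] (m : ℕ) :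
    MeasurableSet ((toZModPow (p := p) m).compLeft ι ⁻¹' {0}) := by
  have : (toZModPow (p := p) m).compLeft ι ⁻¹' {0} =
      Set.univ.pi fun _ => Metric.closedBall 0 ((p : ℝ) ^ (-(m : ℤ))) := by
    ext x
    simp [funext_iff, toZModPow_eq_zero_iff]
  rw [this]
  exact MeasurableSet.univ_pi fun _ => measurableSet_closedBall

end PadicInt

lemma RingHom.map_eval_congr {R S σ : Type*} [CommSemiring R] [CommSemiring S] (φ : R →+* S)
    (f : MvPolynomial σ R) {x y : σ → R} (h : φ ∘ x = φ ∘ y) :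
    φ (eval x f) = φ (eval y f) := by
  rw [eval₂_comp, eval₂_comp, h]

lemma Yset_eq_preimage_Xset {p : ℕ} [Fact p.Prime] {d : ℕ} (f : MvPolynomial (Fin d) ℤ_[p])
    (n : ℕ) : Yset p f n = (PadicInt.toZModPow (n + 1)).compLeft (Fin d) ⁻¹' Xset p f n := by
  refine (Set.subset_preimage_image _ _).antisymm ?_
  rintro x ⟨y, hy, hyx⟩
  exact PadicInt.norm_eq_of_toZModPow_succ_eq (RingHom.map_eval_congr _ f hyx) hy

theorem haar_measure_Yset_general (p : ℕ) [Fact p.Prime] (d : ℕ)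
    (f : MvPolynomial (Fin d) ℤ_[p]) (n : ℕ)
    [MeasurableSpace ℤ_[p]] [BorelSpace ℤ_[p]]
    (μ : Measure (Fin d → ℤ_[p])) [μ.IsAddHaarMeasure] (hμ : μ Set.univ = 1) :
    μ (Yset p f n) = ((Xset p f n).ncard : ℝ≥0∞) * (p : ℝ≥0∞) ^ (-(((n + 1) * d : ℕ) : ℤ)) := by
  have : NeZero p := ⟨(Fact.out : p.Prime).ne_zero⟩
  have hsurj : Function.Surjective ((PadicInt.toZModPow (p := p) (n + 1)).compLeft (Fin d)) :=
    (ZMod.ringHom_surjective (PadicInt.toZModPow (n + 1))).comp_left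
  have hker :=
    PadicInt.measurableSet_compLeft_toZModPow_preimage_zero (p := p) (ι := Fin d) (n + 1)
  have hcard : Nat.card (Fin d → ZMod (p ^ (n + 1))) = p ^ ((n + 1) * d) := by simp [pow_mul]
  rw [Yset_eq_preimage_Xset, measure_preimage_eq_ncard_mul_of_surjective hsurj hker,
    measure_preimage_zero_eq_inv_card_of_surjective hsurj hker hμ, hcard, ENNReal.zpow_neg,
    zpow_natCast, Nat.cast_pow]

/-- The Haar measure of `Y_{n,f} = {x ∈ ℤ_p^d : |f(x)|_p = p^{-n}}` equals
`card(X_{n,f}) · p^{-(n+1)d}`. -/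
theorem haar_measure_Yset (p : ℕ) [Fact p.Prime] (d : ℕ) (hd : 1 ≤ d)
    (f : MvPolynomial (Fin d) ℤ_[p]) (n : ℕ)
    [MeasurableSpace ℤ_[p]] [BorelSpace ℤ_[p]]
    (μ : Measure (Fin d → ℤ_[p])) [μ.IsAddHaarMeasure] (hμ : μ Set.univ = 1) :
    μ (Yset p f n) = ((Xset p f n).ncard : ℝ≥0∞) * (p : ℝ≥0∞) ^ (-(((n + 1) * d : ℕ) : ℤ)) :=
  haar_measure_Yset_general p d f n μ hμ
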